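/- For any three smooth vector fields u, b, Γ̃ on ℝ³ with ∇·Γ̃ = 0, the identity b×[∇×(u×Γ̃)] + u×[∇×(Γ̃×b)] + Γ̃×[u,b] + ∇(u·(b×Γ̃)) = 0 holds, where [u,b] = u·∇b − b·∇u is the Lie bracket. -/

import Mathlib

open scoped BigOperators
open MeasureTheory

noncomputable section

abbrev V3 : Type := Fin 3 → ℝ

/-- Partial derivative of a scalar field in coordinate direction `i`. -/
noncomputable def pd (f : V3 → ℝ) (i : Fin 3) (x : V3) : ℝ :=
  fderiv ℝ f x (Pi.single i 1)

/-- Gradient of a scalar field on ℝ³. -/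
noncomputable def grad3 (f : V3 → ℝ) (x : V3) : V3 := fun i => pd f i x

/-- Divergence of a vector field on ℝ³. -/
noncomputable def div3 (F : V3 → V3) (x : V3) : ℝ := ∑ i, pd (fun y => F y i) i x

/-- Curl of a vector field on ℝ³. -/
noncomputable def curl3 (F : V3 → V3) (x : V3) : V3 :=
  ![pd (fun y => F y 2) 1 x - pd (fun y => F y 1) 2 x,
    pd (fun y => F y 0) 2 x - pd (fun y => F y 2) 0 x,
    pd (fun y => F y 1) 0 x - pd (fun y => F y 0) 1 x]

/-- Cross product in ℝ³. -/
def cross3 (a b : V3) : V3 :=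
  ![a 1 * b 2 - a 2 * b 1, a 2 * b 0 - a 0 * b 2, a 0 * b 1 - a 1 * b 0]

/-- Dot product in ℝ³. -/
def dot3 (a b : V3) : ℝ := ∑ i, a i * b i

/-- Advective derivative (F·∇)G of a vector field G along F. -/
noncomputable def advD (F G : V3 → V3) (x : V3) : V3 :=
  fun j => ∑ i, F x i * pd (fun y => G y j) i x

/-- Time partial derivative of a time-dependent vector field. -/
noncomputable def dtV (F : ℝ → V3 → V3) (t : ℝ) (x : V3) : V3 :=
  fun i => deriv (fun s => F s x i) t

/-- Time partial derivative of a time-dependent scalar field. -/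
noncomputable def dtS (f : ℝ → V3 → ℝ) (t : ℝ) (x : V3) : ℝ :=
  deriv (fun s => f s x) t

/-- Smooth time-dependent vector field. -/
def SmoothTV (F : ℝ → V3 → V3) : Prop := ContDiff ℝ (⊤ : ℕ∞) (Function.uncurry F)

/-- Smooth time-dependent scalar field. -/
def SmoothTS (f : ℝ → V3 → ℝ) : Prop := ContDiff ℝ (⊤ : ℕ∞) (Function.uncurry f)

/-- Smooth (static) vector field. -/
def SmoothV (F : V3 → V3) : Prop := ContDiff ℝ (⊤ : ℕ∞) F

/-- Smooth (static) scalar field. -/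
def SmoothS (f : V3 → ℝ) : Prop := ContDiff ℝ (⊤ : ℕ∞) f

section PartialDerivative

variable {f g : V3 → ℝ} {x : V3}

lemma pd_add (hf : DifferentiableAt ℝ f x) (hg : DifferentiableAt ℝ g x) (i : Fin 3) :
    pd (fun y => f y + g y) i x = pd f i x + pd g i x := by
  simp only [pd, fderiv_fun_add hf hg, add_apply]

lemma pd_sub (hf : DifferentiableAt ℝ f x) (hg : DifferentiableAt ℝ g x) (i : Fin 3) :
    pd (fun y => f y - g y) i x = pd f i x - pd g i x := by
  simp only [pd, fderiv_fun_sub hf hg, sub_apply]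

lemma pd_mul (hf : DifferentiableAt ℝ f x) (hg : DifferentiableAt ℝ g x) (i : Fin 3) :
    pd (fun y => f y * g y) i x = f x * pd g i x + g x * pd f i x := by
  simp only [pd, fderiv_fun_mul hf hg, add_apply, smul_apply, smul_eq_mul]

end PartialDerivative

/-- Both sides are bilinear in first derivatives of `u`, `b`, `G`; expanding by the product
rule, every derivative of `u` and `b` cancels and the derivatives of `G` collect into its
divergence. -/
theorem cross3_curl3_add_grad3_triple_eq_div3_smul {u b G : V3 → V3} {x : V3}
    (hu : DifferentiableAt ℝ u x) (hb : DifferentiableAt ℝ b x) (hG : DifferentiableAt ℝ G x) :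
    cross3 (b x) (curl3 (fun y => cross3 (u y) (G y)) x)
      + cross3 (u x) (curl3 (fun y => cross3 (G y) (b y)) x)
      + cross3 (G x) (advD u b x - advD b u x)
      + grad3 (fun y => dot3 (u y) (cross3 (b y) (G y))) x = div3 G x • cross3 (b x) (u x) := by
  have du := differentiableAt_pi.1 hu
  have db := differentiableAt_pi.1 hb
  have dG := differentiableAt_pi.1 hG
  funext j
  fin_cases j <;>
  · simp only [Fin.zero_eta, Fin.mk_one, Fin.reduceFinMk, cross3, curl3, grad3, dot3, advD, div3,
      Fin.sum_univ_three, Pi.add_apply, Pi.sub_apply, Pi.smul_apply, smul_eq_mul,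
      Matrix.cons_val_zero, Matrix.cons_val_one, Matrix.cons_val_two, Matrix.head_cons,
      Matrix.tail_cons, Fin.isValue]
    simp (disch := fun_prop) only [pd_sub, pd_mul, pd_add]
    ring

theorem vector_identity_divergence_free
    (u b G : V3 → V3) (hu : SmoothV u) (hb : SmoothV b) (hG : SmoothV G)
    (hdivG : ∀ x, div3 G x = 0) :
    ∀ x, cross3 (b x) (curl3 (fun y => cross3 (u y) (G y)) x)
      + cross3 (u x) (curl3 (fun y => cross3 (G y) (b y)) x)
      + cross3 (G x) (advD u b x - advD b u x)
      + grad3 (fun y => dot3 (u y) (cross3 (b y) (G y))) x = 0 := by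
  intro x
  rw [cross3_curl3_add_grad3_triple_eq_div3_smul (hu.differentiable (by simp) x)
    (hb.differentiable (by simp) x) (hG.differentiable (by simp) x), hdivG x, zero_smul]

end
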